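/- For independent r_M, r_S with Rayleigh-type densities 2πλ_M s e^{-πλ_M s²} and 2πλ_S s e^{-πλ_S s²}, and C ∈ (0,1], we have Pr(r_p < r_S < r, r_M > max(r_S/C, r_p)) = (λ_S C²/(λ_M + λ_S C²)) (exp(-(λ_M + λ_S C²) π r_p²/C²) - exp(-(λ_M + λ_S C²) π r²/C²)) for r > r_p. -/

import Mathlib

open MeasureTheory Real

lemma intRayleigh (k c s t : ℝ) (hk : 0 < k) :
    ∫ y in s..t, c * y * Real.exp (-(k * y ^ 2)) =
      c / (2 * k) * (Real.exp (-(k * s ^ 2)) - Real.exp (-(k * t ^ 2))) := by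
  have h : ∀ y : ℝ, HasDerivAt (fun y => -(c / (2 * k)) * Real.exp (-(k * y ^ 2)))
      (c * y * Real.exp (-(k * y ^ 2))) y := by
    intro y
    have h1 : HasDerivAt (fun y : ℝ => -(k * y ^ 2)) (-(k * (2 * y))) y := by
      simpa using (((hasDerivAt_pow 2 y).const_mul k).fun_neg)
    have h2 := (h1.exp).const_mul (-(c / (2 * k)))
    refine h2.congr_deriv ?_
    field_simp
  rw [intervalIntegral.integral_eq_sub_of_hasDerivAt (fun y _ => h y)
    (Continuous.intervalIntegrable (by fun_prop) s t)]
  ring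

/-- For independent nearest-BS distances with Rayleigh-type laws and `C ∈ (0,1]`,
`Pr(r_p < r_S < r, r_M > max(r_S/C, r_p))
  = (λ_S C²/(λ_M + λ_S C²)) (e^{-(λ_M+λ_S C²) π r_p²/C²} - e^{-(λ_M+λ_S C²) π r²/C²})`
for `r > r_p > 0`. -/
theorem stmt19 {Ω : Type*} [MeasurableSpace Ω] (μ : Measure Ω) [IsProbabilityMeasure μ]
    (lamM lamS C rp r : ℝ) (hM : 0 < lamM) (hS : 0 < lamS)
    (hC0 : 0 < C) (hC1 : C ≤ 1) (hrp : 0 < rp) (hr : rp < r)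
    (X Y : Ω → ℝ) (hX : Measurable X) (hY : Measurable Y)
    (hind : ProbabilityTheory.IndepFun X Y μ)
    (hXcdf : ∀ t : ℝ, 0 ≤ t →
      μ {ω | X ω ≤ t} = ENNReal.ofReal (1 - Real.exp (-(π * lamM * t ^ 2))))
    (hYcdf : ∀ t : ℝ, 0 ≤ t →
      μ {ω | Y ω ≤ t} = ENNReal.ofReal (1 - Real.exp (-(π * lamS * t ^ 2)))) :
    μ {ω | rp < Y ω ∧ Y ω < r ∧ max (Y ω / C) rp < X ω}
      = ENNReal.ofReal ((lamS * C ^ 2 / (lamM + lamS * C ^ 2)) *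
          (Real.exp (-((lamM + lamS * C ^ 2) * π * rp ^ 2 / C ^ 2)) -
            Real.exp (-((lamM + lamS * C ^ 2) * π * r ^ 2 / C ^ 2)))) := by
  have hπ : (0:ℝ) < π := Real.pi_pos
  have hC2 : (0:ℝ) < C ^ 2 := by positivity
  -- density of Y
  set f : ℝ → ℝ := fun y => 2 * π * lamS * y * Real.exp (-(π * lamS * y ^ 2)) with hf_def
  have hfc : Continuous f := by fun_prop
  have hfm : Measurable fun y => ENNReal.ofReal (f y) := (hfc.measurable).ennreal_ofReal
  set ρ : Measure ℝ := volume.withDensity (fun y => ENNReal.ofReal (f y)) with hρ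
  haveI : IsProbabilityMeasure (μ.map Y) := Measure.isProbabilityMeasure_map hY.aemeasurable
  haveI : IsProbabilityMeasure (μ.map X) := Measure.isProbabilityMeasure_map hX.aemeasurable
  -- lintegral of density over Iic of a nonpositive point vanishes
  have hzero : ∀ t : ℝ, t ≤ 0 → ∫⁻ y in Set.Iic t, ENNReal.ofReal (f y) = 0 := by
    intro t ht
    rw [setLIntegral_congr_fun measurableSet_Iic
      (fun y (hy : y ∈ Set.Iic t) => ?_), lintegral_zero]
    have hy0 : y ≤ 0 := le_trans hy ht
    have hexp := Real.exp_pos (-(π * lamS * y ^ 2))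
    show ENNReal.ofReal (f y) = 0
    rw [ENNReal.ofReal_eq_zero]
    have h1 : 2 * π * lamS * y ≤ 0 :=
      mul_nonpos_iff.2 (Or.inl ⟨by positivity, hy0⟩)
    exact mul_nonpos_iff.2 (Or.inr ⟨h1, hexp.le⟩)
  -- the law of Y equals ρ
  have hYρ : μ.map Y = ρ := by
    refine Measure.ext_of_Iic (μ.map Y) ρ (fun t => ?_)
    have hmap : (μ.map Y) (Set.Iic t) = μ {ω | Y ω ≤ t} := by
      rw [Measure.map_apply hY measurableSet_Iic]; rfl
    have hρap : ρ (Set.Iic t) = ∫⁻ y in Set.Iic t, ENNReal.ofReal (f y) :=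
      withDensity_apply _ measurableSet_Iic
    rcases le_or_gt t 0 with ht | ht
    · rw [hmap, hρap, hzero t ht]
      have h0 : μ {ω | Y ω ≤ (0:ℝ)} = 0 := by rw [hYcdf 0 le_rfl]; simp
      exact measure_mono_null (fun ω (h : Y ω ≤ t) => (le_trans h ht : Y ω ≤ (0:ℝ))) h0
    · rw [hmap, hYcdf t ht.le, hρap]
      have hsplit : Set.Iic t = Set.Iic (0:ℝ) ∪ Set.Ioc 0 t := (Set.Iic_union_Ioc_eq_Iic ht.le).symm
      rw [hsplit, lintegral_union measurableSet_Ioc (Set.Iic_disjoint_Ioc le_rfl),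
        hzero 0 le_rfl, zero_add]
      rw [← ofReal_integral_eq_lintegral_ofReal
        (hfc.integrableOn_Ioc)
        (Filter.Eventually.mono (ae_restrict_mem measurableSet_Ioc) (fun y hy => by
          have : (0:ℝ) < y := hy.1
          have := Real.exp_pos (-(π * lamS * y ^ 2))
          show 0 ≤ f y
          positivity))]
      congr 1
      rw [← intervalIntegral.integral_of_le ht.le]
      have := intRayleigh (π * lamS) (2 * π * lamS) 0 t (by positivity)
      rw [show (fun y => f y) = fun y => 2 * π * lamS * y * Real.exp (-(π * lamS * y ^ 2)) from rfl]
      rw [this]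
      field_simp
      simp
  -- reduce the max
  have hset : {ω | rp < Y ω ∧ Y ω < r ∧ max (Y ω / C) rp < X ω}
      = (fun ω => (Y ω, X ω)) ⁻¹' {p : ℝ × ℝ | rp < p.1 ∧ p.1 < r ∧ p.1 / C < p.2} := by
    ext ω
    simp only [Set.mem_setOf_eq, Set.mem_preimage]
    constructor
    · rintro ⟨h1, h2, h3⟩
      exact ⟨h1, h2, lt_of_le_of_lt (le_max_left _ _) h3⟩
    · rintro ⟨h1, h2, h3⟩
      refine ⟨h1, h2, ?_⟩
      have hy0 : 0 < Y ω := hrp.trans h1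
      have hle : Y ω ≤ Y ω / C := le_div_self hy0.le hC0 hC1
      rw [max_eq_left (by linarith)]
      exact h3
  have hT : MeasurableSet {p : ℝ × ℝ | rp < p.1 ∧ p.1 < r ∧ p.1 / C < p.2} := by
    have h1 : IsOpen {p : ℝ × ℝ | rp < p.1} := isOpen_lt continuous_const continuous_fst
    have h2 : IsOpen {p : ℝ × ℝ | p.1 < r} := isOpen_lt continuous_fst continuous_const
    have h3 : IsOpen {p : ℝ × ℝ | p.1 / C < p.2} :=
      isOpen_lt (continuous_fst.div_const C) continuous_snd
    exact (h1.inter (h2.inter h3)).measurableSet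
  have hprod : μ.map (fun ω => (Y ω, X ω)) = (μ.map Y).prod (μ.map X) :=
    (ProbabilityTheory.indepFun_iff_map_prod_eq_prod_map_map hY.aemeasurable
      hX.aemeasurable).mp hind.symm
  rw [hset, ← Measure.map_apply (hY.prodMk hX) hT, hprod, Measure.prod_apply hT]
  -- the section measure
  have hsec : ∀ y : ℝ,
      (μ.map X) (Prod.mk y ⁻¹' {p : ℝ × ℝ | rp < p.1 ∧ p.1 < r ∧ p.1 / C < p.2})
      = Set.indicator (Set.Ioo rp r)
          (fun y => ENNReal.ofReal (Real.exp (-(π * lamM * (y / C) ^ 2)))) y := by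
    intro y
    by_cases hy : y ∈ Set.Ioo rp r
    · rw [Set.indicator_of_mem hy]
      have hpre : Prod.mk y ⁻¹' {p : ℝ × ℝ | rp < p.1 ∧ p.1 < r ∧ p.1 / C < p.2}
          = Set.Ioi (y / C) := by
        ext x
        simp [Set.mem_preimage, Set.mem_Ioi, hy.1, hy.2]
      have hy0 : (0:ℝ) ≤ y / C := by
        have : 0 < y := hrp.trans hy.1
        positivity
      have hIic : (μ.map X) (Set.Iic (y / C))
          = ENNReal.ofReal (1 - Real.exp (-(π * lamM * (y / C) ^ 2))) := by
        rw [Measure.map_apply hX measurableSet_Iic]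
        exact hXcdf _ hy0
      have he1 : Real.exp (-(π * lamM * (y / C) ^ 2)) ≤ 1 :=
        Real.exp_le_one_iff.2 (neg_nonpos.2 (by positivity))
      rw [hpre, ← Set.compl_Iic, measure_compl measurableSet_Iic (measure_ne_top _ _),
        measure_univ, hIic]
      rw [← ENNReal.ofReal_one, ← ENNReal.ofReal_sub 1 (sub_nonneg.2 he1)]
      congr 1
      ring
    · rw [Set.indicator_of_notMem hy]
      have hpre : Prod.mk y ⁻¹' {p : ℝ × ℝ | rp < p.1 ∧ p.1 < r ∧ p.1 / C < p.2}
          = (∅ : Set ℝ) := by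
        ext x
        simp only [Set.mem_preimage, Set.mem_setOf_eq, Set.mem_empty_iff_false, iff_false,
          not_and]
        intro h1 h2
        exact absurd ⟨h1, h2⟩ hy
      rw [hpre, measure_empty]
  rw [lintegral_congr hsec, hYρ, lintegral_indicator measurableSet_Ioo]
  have hgm : Measurable fun y : ℝ => ENNReal.ofReal (Real.exp (-(π * lamM * (y / C) ^ 2))) := by
    fun_prop
  rw [setLIntegral_withDensity_eq_setLIntegral_mul volume hfm hgm measurableSet_Ioo]
  set k : ℝ := π * lamS + π * lamM / C ^ 2 with hk_def
  have hk : 0 < k := by positivity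
  have hintegrand : ∀ y : ℝ, f y * Real.exp (-(π * lamM * (y / C) ^ 2))
      = 2 * π * lamS * y * Real.exp (-(k * y ^ 2)) := by
    intro y
    show 2 * π * lamS * y * Real.exp (-(π * lamS * y ^ 2)) * Real.exp (-(π * lamM * (y / C) ^ 2))
      = 2 * π * lamS * y * Real.exp (-(k * y ^ 2))
    rw [mul_assoc, ← Real.exp_add]
    congr 2
    rw [hk_def]
    field_simp
    ring
  have hpt : ∀ y ∈ Set.Ioo rp r,
      ((fun y => ENNReal.ofReal (f y)) *
        fun y => ENNReal.ofReal (Real.exp (-(π * lamM * (y / C) ^ 2)))) y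
      = ENNReal.ofReal (2 * π * lamS * y * Real.exp (-(k * y ^ 2))) := by
    intro y hy
    have hy0 : 0 < y := hrp.trans hy.1
    have hf0 : 0 ≤ f y := by
      have := Real.exp_pos (-(π * lamS * y ^ 2))
      show 0 ≤ 2 * π * lamS * y * Real.exp (-(π * lamS * y ^ 2))
      positivity
    show ENNReal.ofReal (f y) * ENNReal.ofReal (Real.exp (-(π * lamM * (y / C) ^ 2)))
      = ENNReal.ofReal (2 * π * lamS * y * Real.exp (-(k * y ^ 2)))
    rw [← ENNReal.ofReal_mul hf0, hintegrand y]
  rw [setLIntegral_congr_fun measurableSet_Ioo hpt]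
  have hInt : IntegrableOn (fun y : ℝ => 2 * π * lamS * y * Real.exp (-(k * y ^ 2)))
      (Set.Ioo rp r) volume :=
    ((Continuous.integrableOn_Icc (by fun_prop)).mono_set Set.Ioo_subset_Icc_self)
  rw [← ofReal_integral_eq_lintegral_ofReal hInt
    (Filter.Eventually.mono (ae_restrict_mem measurableSet_Ioo) (fun y hy => by
      have hy0 : 0 < y := hrp.trans hy.1
      have := Real.exp_pos (-(k * y ^ 2))
      positivity))]
  rw [← MeasureTheory.integral_Ioc_eq_integral_Ioo, ← intervalIntegral.integral_of_le hr.le,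
    intRayleigh k (2 * π * lamS) rp r hk]
  congr 1
  have hden : lamM + lamS * C ^ 2 > 0 := by positivity
  have e1 : -(k * rp ^ 2) = -((lamM + lamS * C ^ 2) * π * rp ^ 2 / C ^ 2) := by
    rw [hk_def, neg_inj, eq_div_iff hC2.ne']; field_simp
    first
    | ring1
    | tauto
    | (left; ring1)
  have e2 : -(k * r ^ 2) = -((lamM + lamS * C ^ 2) * π * r ^ 2 / C ^ 2) := by
    rw [hk_def, neg_inj, eq_div_iff hC2.ne']; field_simp
    first
    | ring1
    | tauto
    | (left; ring1)
  rw [e1, e2]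
  congr 1
  rw [hk_def]
  field_simp
  ring
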